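/- arXiv:1309.4755 — 4 statements merged into one kernel-verified Lean document; each statement's English description precedes it below -/
import Mathlib

section
/- For every λ > 0 there exists exactly one spectral pair at λ; that is, there exist c ∈ ℝ and Q : [θmin, θmax] → ℝ forming a spectral pair at λ, and if (c₁, Q₁) and (c₂, Q₂) are both spectral pairs at λ then c₁ = c₂ and Q₁ = Q₂. -/
/-!
Uniqueness. For two spectral pairs the Wronskian `Q₁' Q₂ - Q₁ Q₂'` vanishes at both ends by the
Neumann conditions and has derivative `lam (c₁ - c₂) / alpha * Q₁ Q₂`, whose integral is therefore
zero; as `Q₁ Q₂ > 0`, `c₁ = c₂`. Then `Q₁ - κ Q₂` with `κ = Q₁ thmin / Q₂ thmin` solves the equation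
with zero Cauchy data at `thmin`, hence vanishes, and the normalization forces `κ = 1`.

Existence, by shooting. With `A = -lam ^ 2 / alpha` the equation reads
`Q'' = (β + A (θ - thmin)) Q`. Its solution `P β` with `P β thmin = 1`, `(P β)' thmin = 0` is an
entire power series depending continuously on `β`. The set `S` of `β` for which `P β > 0` on
`[thmin, thmax]` and `(P β)' thmax > 0` is open, contains every large `β` (then `P β` is convex and
increasing), and is bounded below (Sturm comparison with `cos`). At `β = inf S` we get `P β ≥ 0`
and `(P β)' thmax ≥ 0`; a zero of `P β` would be a double zero, excluded by uniqueness for the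
Cauchy problem, so `P β > 0`; and `(P β)' thmax > 0` would put `inf S` in the open set `S`. Hence
`(P β)' thmax = 0`, and `P β`, normalized, gives the spectral pair.
-/

open Set Filter MeasureTheory

/-- A spectral pair `(c, Q)` at `lam` for parameters `thmin thmax alpha r`:
`Q` is positive, normalized, twice continuously differentiable, solves the eigenproblem
on `(thmin, thmax)` and satisfies Neumann boundary conditions. -/
def IsSpectralPair (thmin thmax alpha r lam c : ℝ) (Q : ℝ → ℝ) : Prop :=
  ContDiff ℝ 2 Q ∧
  (∀ θ ∈ Set.Icc thmin thmax, 0 < Q θ) ∧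
  (∫ θ in Set.Ioo thmin thmax, Q θ) = 1 ∧
  (∀ θ ∈ Set.Ioo thmin thmax,
    alpha * iteratedDeriv 2 Q θ + (-(lam * c) + θ * lam ^ 2 + r) * Q θ = 0) ∧
  deriv Q thmin = 0 ∧ deriv Q thmax = 0

open scoped Nat Topology

noncomputable def powerSeriesSum (c : ℕ → ℝ) (x₀ x : ℝ) : ℝ := ∑' n, c n * (x - x₀) ^ n

noncomputable def derivCoeffs (c : ℕ → ℝ) (n : ℕ) : ℝ := (n + 1) * c (n + 1)

/-- `|c n| ≤ C ^ (n + 1) / √(n !)`: strong enough to make the power series entire, and preserved by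
the three-term recursion of `airyCoeffs`. -/
def SqrtFactorialBound (c : ℕ → ℝ) (C : ℝ) : Prop :=
  1 ≤ C ∧ ∀ n, |c n| * √(n ! : ℝ) ≤ C ^ (n + 1)

lemma sqrt_factorial_succ (n : ℕ) : √((n + 1)! : ℝ) = √((n : ℝ) + 1) * √(n ! : ℝ) := by
  rw [Nat.factorial_succ, Nat.cast_mul, Real.sqrt_mul (by positivity), Nat.cast_succ]

lemma sqrt_factorial_add_three_le {m n : ℕ} (hm : n ≤ m) :
    √((n + 3)! : ℝ) ≤ ((n + 2) * (n + 3)) * √(m ! : ℝ) := by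
  rw [Real.sqrt_le_iff, mul_pow, Real.sq_sqrt (by positivity)]
  refine ⟨by positivity, ?_⟩
  have hfac : (n + 3)! ≤ ((n + 2) * (n + 3)) ^ 2 * m ! := by
    calc (n + 3)! = (n + 2) * (n + 3) * ((n + 1) * n !) := by
          simp only [Nat.factorial_succ]; ring
      _ ≤ (n + 2) * (n + 3) * ((n + 2) * (n + 3) * m !) := by
          gcongr
          nlinarith
      _ = ((n + 2) * (n + 3)) ^ 2 * m ! := by ring
  exact_mod_cast hfac

lemma summable_pow_div_sqrt_factorial (C : ℝ) : Summable fun n : ℕ => C ^ n / √(n ! : ℝ) := by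
  refine summable_of_ratio_norm_eventually_le (r := 1 / 2) (by norm_num) ?_
  filter_upwards [eventually_ge_atTop ⌈4 * C ^ 2⌉₊] with n hn
  have hsqrt : 2 * |C| ≤ √((n : ℝ) + 1) := by
    rw [Real.le_sqrt (by positivity) (by positivity), mul_pow, sq_abs]
    have := (Nat.ceil_le).mp hn
    linarith
  have hfac : 0 < √(n ! : ℝ) := by positivity
  rw [norm_div, norm_div, norm_pow, norm_pow, Real.norm_eq_abs, Real.norm_of_nonneg hfac.le,
    Real.norm_of_nonneg (Real.sqrt_nonneg _), sqrt_factorial_succ, pow_succ,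
    div_le_iff₀ (by positivity)]
  calc |C| ^ n * |C| ≤ |C| ^ n * (√((n : ℝ) + 1) / 2) := by gcongr; linarith
    _ = 1 / 2 * (|C| ^ n / √(n ! : ℝ)) * (√((n : ℝ) + 1) * √(n ! : ℝ)) := by field_simp

lemma summable_sqrtFactorial_majorant (C R : ℝ) :
    Summable fun n : ℕ => C ^ (n + 1) * R ^ n / √(n ! : ℝ) := by
  have h (n : ℕ) : C ^ (n + 1) * R ^ n / √(n ! : ℝ) = C * ((C * R) ^ n / √(n ! : ℝ)) := by ring
  simpa only [h] using (summable_pow_div_sqrt_factorial (C * R)).mul_left C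

lemma powerSeriesSum_self (c : ℕ → ℝ) (x₀ : ℝ) : powerSeriesSum c x₀ x₀ = c 0 := by
  rw [powerSeriesSum, tsum_eq_single 0 fun n hn => by simp [hn]]
  simp

namespace SqrtFactorialBound

variable {c : ℕ → ℝ} {C : ℝ}

lemma nonneg (h : SqrtFactorialBound c C) : 0 ≤ C := zero_le_one.trans h.1

lemma mono (h : SqrtFactorialBound c C) {C' : ℝ} (hC : C ≤ C') : SqrtFactorialBound c C' :=
  ⟨h.1.trans hC, fun n => (h.2 n).trans (pow_le_pow_left₀ h.nonneg hC _)⟩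

lemma abs_mul_pow_le (h : SqrtFactorialBound c C) {x₀ x R : ℝ} (hx : |x - x₀| ≤ R) (n : ℕ) :
    |c n * (x - x₀) ^ n| ≤ C ^ (n + 1) * R ^ n / √(n ! : ℝ) := by
  have hc : |c n| ≤ C ^ (n + 1) / √(n ! : ℝ) := by
    rw [le_div_iff₀ (by positivity)]
    exact h.2 n
  rw [abs_mul, abs_pow, mul_div_right_comm]
  exact mul_le_mul hc (pow_le_pow_left₀ (abs_nonneg _) hx n) (by positivity)
    (div_nonneg (pow_nonneg h.nonneg _) (Real.sqrt_nonneg _))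

lemma summable (h : SqrtFactorialBound c C) (x₀ x : ℝ) :
    Summable fun n => c n * (x - x₀) ^ n :=
  .of_norm_bounded (summable_sqrtFactorial_majorant C |x - x₀|) (h.abs_mul_pow_le le_rfl)

lemma derivCoeffs (h : SqrtFactorialBound c C) :
    SqrtFactorialBound (derivCoeffs c) (2 * C ^ 2) := by
  have hC := h.1
  refine ⟨by nlinarith, fun n => ?_⟩
  have hsqrt : √((n : ℝ) + 1) ≤ 2 ^ n := by
    rw [Real.sqrt_le_left (by positivity)]
    have : (n : ℝ) + 1 ≤ 2 ^ n := by exact_mod_cast Nat.lt_two_pow_self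
    nlinarith [one_le_pow₀ (M₀ := ℝ) (a := 2) (n := n) (by norm_num)]
  have hfac := h.2 (n + 1)
  rw [sqrt_factorial_succ] at hfac
  calc |_root_.derivCoeffs c n| * √(n ! : ℝ)
      = √((n : ℝ) + 1) * (|c (n + 1)| * (√((n : ℝ) + 1) * √(n ! : ℝ))) := by
        rw [_root_.derivCoeffs, abs_mul, abs_of_nonneg (by positivity : (0 : ℝ) ≤ n + 1)]
        nth_rw 1 [← Real.mul_self_sqrt (by positivity : (0 : ℝ) ≤ n + 1)]
        ring
    _ ≤ 2 ^ n * C ^ (n + 2) := by gcongr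
    _ ≤ 2 ^ (n + 1) * C ^ (2 * n + 2) := by
        gcongr <;> first | omega | norm_num
    _ = (2 * C ^ 2) ^ (n + 1) := by ring

lemma hasDerivAt_powerSeriesSum (h : SqrtFactorialBound c C) (x₀ x : ℝ) :
    HasDerivAt (powerSeriesSum c x₀) (powerSeriesSum (_root_.derivCoeffs c) x₀ x) x := by
  set R := |x - x₀| + 1
  set u : ℕ → ℝ := fun n => (2 * C ^ 2) ^ n * R ^ (n - 1) / √((n - 1)! : ℝ)
  have hu : Summable u := by
    rw [← summable_nat_add_iff 1]
    simpa [u] using summable_sqrtFactorial_majorant (2 * C ^ 2) R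
  have hterm : ∀ n y, HasDerivAt (fun z => c n * (z - x₀) ^ n)
      (c n * (n * (y - x₀) ^ (n - 1))) y := fun n y => by
    simpa using
      ((hasDerivAt_pow n (y - x₀)).comp y ((hasDerivAt_id y).sub_const x₀)).const_mul (c n)
  have hbound : ∀ n, ∀ y ∈ Metric.ball x₀ R, ‖c n * (n * (y - x₀) ^ (n - 1))‖ ≤ u n := by
    rintro (_ | n) y hy
    · simp [u]
    · rw [Metric.mem_ball, Real.dist_eq] at hy
      simpa [u, _root_.derivCoeffs, mul_assoc, mul_comm, mul_left_comm]
        using h.derivCoeffs.abs_mul_pow_le hy.le n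
  have hx : x ∈ Metric.ball x₀ R := by simp [R, Real.dist_eq]
  have key := hasDerivAt_tsum_of_isPreconnected hu Metric.isOpen_ball
    (convex_ball x₀ R).isPreconnected (fun n y _ => hterm n y) hbound hx (h.summable x₀ x) hx
  have hsum : ∑' n, c n * (n * (x - x₀) ^ (n - 1))
      = powerSeriesSum (_root_.derivCoeffs c) x₀ x := by
    rw [(Summable.of_norm_bounded hu fun n => hbound n x hx).tsum_eq_zero_add]
    simp [powerSeriesSum, _root_.derivCoeffs, mul_comm, mul_left_comm]
  exact hsum ▸ key

end SqrtFactorialBound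

theorem continuous_powerSeriesSum_uncurry {X : Type*} [TopologicalSpace X] {c : X → ℕ → ℝ}
    (x₀ : ℝ) (hc : ∀ n, Continuous fun p => c p n)
    (hC : ∀ p₀, ∃ C, ∀ᶠ p in 𝓝 p₀, SqrtFactorialBound (c p) C) :
    Continuous fun q : X × ℝ => powerSeriesSum (c q.1) x₀ q.2 := by
  refine continuous_iff_continuousAt.mpr fun ⟨p₀, y₀⟩ => ?_
  obtain ⟨C, hp⟩ := hC p₀
  set s := {p | SqrtFactorialBound (c p) C} ×ˢ Icc (y₀ - 1) (y₀ + 1)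
  have hs : s ∈ 𝓝 (p₀, y₀) := prod_mem_nhds hp (Icc_mem_nhds (by linarith) (by linarith))
  refine (continuousOn_tsum (fun n => ?_) (summable_sqrtFactorial_majorant C (|y₀ - x₀| + 1))
    (fun n q hq => ?_)).continuousAt hs
  · exact (((hc n).comp continuous_fst).mul
      ((continuous_snd.sub continuous_const).pow n)).continuousOn
  · obtain ⟨hq₁, hq₂⟩ := hq
    refine hq₁.abs_mul_pow_le ?_ n
    rw [mem_Icc] at hq₂
    cases abs_cases (q.2 - x₀) <;> cases abs_cases (y₀ - x₀) <;> linarith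

/-- Taylor coefficients at `x₀` of the solution of `y'' = (A (x - x₀) + B) y` with `y x₀ = 1` and
`y' x₀ = 0`. -/
noncomputable def airyCoeffs (A B : ℝ) : ℕ → ℝ
  | 0 => 1
  | 1 => 0
  | 2 => B / 2
  | n + 3 => (B * airyCoeffs A B (n + 1) + A * airyCoeffs A B n) / ((n + 2) * (n + 3))

section airyCoeffs

variable {A B : ℝ}

lemma derivCoeffs_derivCoeffs_airyCoeffs_zero :
    derivCoeffs (derivCoeffs (airyCoeffs A B)) 0 = B * airyCoeffs A B 0 := by
  simp only [derivCoeffs, airyCoeffs]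
  ring

lemma derivCoeffs_derivCoeffs_airyCoeffs_succ (n : ℕ) :
    derivCoeffs (derivCoeffs (airyCoeffs A B)) (n + 1)
      = B * airyCoeffs A B (n + 1) + A * airyCoeffs A B n := by
  simp only [derivCoeffs, airyCoeffs]
  push_cast
  field_simp
  ring

lemma abs_airyCoeffs_mul_sqrt_factorial_add_three_le (n : ℕ) :
    |airyCoeffs A B (n + 3)| * √((n + 3)! : ℝ)
      ≤ |B| * (|airyCoeffs A B (n + 1)| * √((n + 1)! : ℝ))
        + |A| * (|airyCoeffs A B n| * √(n ! : ℝ)) := by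
  set D : ℝ := (n + 2) * (n + 3)
  have hD : 0 < D := by positivity
  have h₁ : √((n + 3)! : ℝ) / D ≤ √((n + 1)! : ℝ) := by
    rw [div_le_iff₀ hD, mul_comm]
    exact sqrt_factorial_add_three_le n.le_succ
  have h₀ : √((n + 3)! : ℝ) / D ≤ √(n ! : ℝ) := by
    rw [div_le_iff₀ hD, mul_comm]
    exact sqrt_factorial_add_three_le le_rfl
  calc |airyCoeffs A B (n + 3)| * √((n + 3)! : ℝ)
      = |B * airyCoeffs A B (n + 1) + A * airyCoeffs A B n| * (√((n + 3)! : ℝ) / D) := by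
        rw [airyCoeffs, abs_div, abs_of_pos (by positivity : (0 : ℝ) < (n + 2) * (n + 3))]
        ring
    _ ≤ (|B| * |airyCoeffs A B (n + 1)| + |A| * |airyCoeffs A B n|) * (√((n + 3)! : ℝ) / D) := by
        gcongr
        exact (abs_add_le _ _).trans_eq (by rw [abs_mul, abs_mul])
    _ ≤ _ := by
        rw [add_mul, mul_assoc, mul_assoc]
        gcongr

end airyCoeffs

lemma sqrtFactorialBound_airyCoeffs (A B : ℝ) :
    SqrtFactorialBound (airyCoeffs A B) (1 + 2 * |A| + 2 * |B|) := by
  set C := 1 + 2 * |A| + 2 * |B|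
  have hC : 1 ≤ C := by linarith [abs_nonneg A, abs_nonneg B]
  have hB : |B| ≤ C ^ 2 / 2 := by nlinarith [abs_nonneg A]
  have hA : |A| ≤ C ^ 3 / 2 := by nlinarith [abs_nonneg B]
  refine ⟨hC, fun n => ?_⟩
  induction n using Nat.strong_induction_on with
  | _ n ih =>
    match n with
    | 0 => simpa [airyCoeffs] using hC
    | 1 => simp [airyCoeffs]; positivity
    | 2 =>
      have : √(2 : ℝ) ≤ 2 := by rw [Real.sqrt_le_left zero_le_two]; norm_num
      calc |airyCoeffs A B 2| * √((2 : ℕ)! : ℝ) = |B| / 2 * √2 := by simp [airyCoeffs, abs_div]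
        _ ≤ C ^ 2 / 2 / 2 * 2 := by gcongr
        _ ≤ C ^ (2 + 1) := by nlinarith
    | n + 3 =>
      calc |airyCoeffs A B (n + 3)| * √((n + 3)! : ℝ)
          ≤ |B| * (|airyCoeffs A B (n + 1)| * √((n + 1)! : ℝ))
            + |A| * (|airyCoeffs A B n| * √(n ! : ℝ)) :=
            abs_airyCoeffs_mul_sqrt_factorial_add_three_le n
        _ ≤ C ^ 2 / 2 * C ^ (n + 2) + C ^ 3 / 2 * C ^ (n + 1) := by
            gcongr
            · exact ih (n + 1) (by omega)
            · exact ih n (by omega)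
        _ = C ^ (n + 3 + 1) := by ring

theorem continuous_airyCoeffs (A : ℝ) : ∀ n, Continuous fun B => airyCoeffs A B n
  | 0 => continuous_const
  | 1 => continuous_const
  | 2 => continuous_id.div_const 2
  | n + 3 => ((continuous_id.mul (continuous_airyCoeffs A (n + 1))).add
      (continuous_const.mul (continuous_airyCoeffs A n))).div_const _

theorem powerSeriesSum_airyCoeffs_ode (A B x₀ x : ℝ) :
    powerSeriesSum (derivCoeffs (derivCoeffs (airyCoeffs A B))) x₀ x
      = (A * (x - x₀) + B) * powerSeriesSum (airyCoeffs A B) x₀ x := by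
  have hbound := sqrtFactorialBound_airyCoeffs A B
  have hs := hbound.summable x₀ x
  have hs' := (summable_nat_add_iff 1).mpr hs
  have hterm (n : ℕ) : derivCoeffs (derivCoeffs (airyCoeffs A B)) (n + 1) * (x - x₀) ^ (n + 1)
      = B * (airyCoeffs A B (n + 1) * (x - x₀) ^ (n + 1))
        + A * (x - x₀) * (airyCoeffs A B n * (x - x₀) ^ n) := by
    rw [derivCoeffs_derivCoeffs_airyCoeffs_succ]
    ring
  rw [powerSeriesSum, powerSeriesSum,
    (hbound.derivCoeffs.derivCoeffs.summable x₀ x).tsum_eq_zero_add, hs.tsum_eq_zero_add]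
  simp only [hterm, derivCoeffs_derivCoeffs_airyCoeffs_zero]
  rw [(hs'.mul_left B).tsum_add (hs.mul_left (A * (x - x₀))), tsum_mul_left, tsum_mul_left,
    hs.tsum_eq_zero_add]
  ring

section airyFamily

variable (A x₀ : ℝ)

lemma hasDerivAt_powerSeriesSum_airyCoeffs (B x : ℝ) :
    HasDerivAt (powerSeriesSum (airyCoeffs A B) x₀)
      (powerSeriesSum (derivCoeffs (airyCoeffs A B)) x₀ x) x :=
  (sqrtFactorialBound_airyCoeffs A B).hasDerivAt_powerSeriesSum x₀ x

lemma hasDerivAt_powerSeriesSum_derivCoeffs_airyCoeffs (B x : ℝ) :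
    HasDerivAt (powerSeriesSum (derivCoeffs (airyCoeffs A B)) x₀)
      ((A * (x - x₀) + B) * powerSeriesSum (airyCoeffs A B) x₀ x) x := by
  rw [← powerSeriesSum_airyCoeffs_ode]
  exact (sqrtFactorialBound_airyCoeffs A B).derivCoeffs.hasDerivAt_powerSeriesSum x₀ x

lemma powerSeriesSum_airyCoeffs_self (B : ℝ) : powerSeriesSum (airyCoeffs A B) x₀ x₀ = 1 := by
  rw [powerSeriesSum_self, airyCoeffs]

lemma powerSeriesSum_derivCoeffs_airyCoeffs_self (B : ℝ) :
    powerSeriesSum (derivCoeffs (airyCoeffs A B)) x₀ x₀ = 0 := by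
  simp [powerSeriesSum_self, derivCoeffs, airyCoeffs]

lemma eventually_sqrtFactorialBound_airyCoeffs (B₀ : ℝ) :
    ∃ C, ∀ᶠ B in 𝓝 B₀, SqrtFactorialBound (airyCoeffs A B) C := by
  refine ⟨1 + 2 * |A| + 2 * (|B₀| + 1), ?_⟩
  filter_upwards [(continuous_abs.tendsto B₀).eventually (gt_mem_nhds (lt_add_one |B₀|))] with B hB
  exact (sqrtFactorialBound_airyCoeffs A B).mono (by linarith)

lemma continuous_powerSeriesSum_airyCoeffs :
    Continuous fun q : ℝ × ℝ => powerSeriesSum (airyCoeffs A q.1) x₀ q.2 :=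
  continuous_powerSeriesSum_uncurry x₀ (fun n => continuous_airyCoeffs A n)
    (eventually_sqrtFactorialBound_airyCoeffs A)

lemma continuous_powerSeriesSum_derivCoeffs_airyCoeffs :
    Continuous fun q : ℝ × ℝ => powerSeriesSum (derivCoeffs (airyCoeffs A q.1)) x₀ q.2 := by
  refine continuous_powerSeriesSum_uncurry (c := fun B => derivCoeffs (airyCoeffs A B)) x₀
    (fun n => (continuous_airyCoeffs A (n + 1)).const_mul _) fun B₀ => ?_
  obtain ⟨C, hC⟩ := eventually_sqrtFactorialBound_airyCoeffs A B₀
  exact ⟨2 * C ^ 2, hC.mono fun _ hB => hB.derivCoeffs⟩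

end airyFamily

section Icc

variable {f f' : ℝ → ℝ} {a b : ℝ}

lemma monotoneOn_Icc_of_hasDerivAt (hf : ∀ x ∈ Icc a b, HasDerivAt f (f' x) x)
    (hf' : ∀ x ∈ Ioo a b, 0 ≤ f' x) : MonotoneOn f (Icc a b) :=
  monotoneOn_of_hasDerivWithinAt_nonneg (convex_Icc a b) (HasDerivAt.continuousOn hf)
    (fun x hx => (hf x (interior_subset hx)).hasDerivWithinAt) (by rwa [interior_Icc])

lemma antitoneOn_Icc_of_hasDerivAt (hf : ∀ x ∈ Icc a b, HasDerivAt f (f' x) x)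
    (hf' : ∀ x ∈ Ioo a b, f' x ≤ 0) : AntitoneOn f (Icc a b) :=
  antitoneOn_of_hasDerivWithinAt_nonpos (convex_Icc a b) (HasDerivAt.continuousOn hf)
    (fun x hx => (hf x (interior_subset hx)).hasDerivWithinAt) (by rwa [interior_Icc])

lemma strictMonoOn_Icc_of_hasDerivAt (hf : ∀ x ∈ Icc a b, HasDerivAt f (f' x) x)
    (hf' : ∀ x ∈ Ioo a b, 0 < f' x) : StrictMonoOn f (Icc a b) :=
  strictMonoOn_of_hasDerivWithinAt_pos (convex_Icc a b) (HasDerivAt.continuousOn hf)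
    (fun x hx => (hf x (interior_subset hx)).hasDerivWithinAt) (by rwa [interior_Icc])

end Icc

section MinOn

variable {f : ℝ → ℝ} {f' a b x : ℝ}

lemma IsMinOn.hasDerivAt_nonpos_of_mem_Ioc (hmin : IsMinOn f (Icc a b) x) (hf : HasDerivAt f f' x)
    (hx : x ∈ Ioc a b) : f' ≤ 0 := by
  have hseg : segment ℝ x a ⊆ Icc a b :=
    (convex_Icc a b).segment_subset (Ioc_subset_Icc_self hx)
      (left_mem_Icc.mpr (hx.1.le.trans hx.2))
  have := hmin.localize.hasFDerivWithinAt_nonneg hf.hasDerivWithinAt.hasFDerivWithinAt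
    (sub_mem_posTangentConeAt_of_segment_subset hseg)
  simp only [ContinuousLinearMap.toSpanSingleton_apply, smul_eq_mul] at this
  nlinarith [hx.1]

lemma IsMinOn.hasDerivAt_nonneg_of_mem_Ico (hmin : IsMinOn f (Icc a b) x) (hf : HasDerivAt f f' x)
    (hx : x ∈ Ico a b) : 0 ≤ f' := by
  have hseg : segment ℝ x b ⊆ Icc a b :=
    (convex_Icc a b).segment_subset (Ico_subset_Icc_self hx)
      (right_mem_Icc.mpr (hx.1.trans hx.2.le))
  have := hmin.localize.hasFDerivWithinAt_nonneg hf.hasDerivWithinAt.hasFDerivWithinAt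
    (sub_mem_posTangentConeAt_of_segment_subset hseg)
  simp only [ContinuousLinearMap.toSpanSingleton_apply, smul_eq_mul] at this
  nlinarith [hx.2]

end MinOn

lemma eqOn_zero_of_hasDerivAt_of_eq_zero {f g k : ℝ → ℝ} {a b x₀ : ℝ}
    (hk : ContinuousOn k (Icc a b)) (hf : ∀ x ∈ Icc a b, HasDerivAt f (g x) x)
    (hg : ∀ x ∈ Icc a b, HasDerivAt g (k x * f x) x) (hx₀ : x₀ ∈ Icc a b)
    (hf₀ : f x₀ = 0) (hg₀ : g x₀ = 0) : EqOn f 0 (Icc a b) := by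
  obtain ⟨M, hM⟩ := isCompact_Icc.exists_bound_of_continuousOn hk
  set K := max 1 M
  set v : ℝ → ℝ × ℝ → ℝ × ℝ := fun t p => (p.2, k t * p.1)
  have hv : ∀ t ∈ Icc a b, LipschitzOnWith K.toNNReal (v t) univ := fun t ht => by
    refine (LipschitzWith.of_dist_le_mul fun p q => ?_).lipschitzOnWith
    have hkt : |k t| ≤ K := (hM t ht).trans (le_max_right _ _)
    rw [Real.coe_toNNReal _ (zero_le_one.trans (le_max_left _ _))]
    simp only [v, Prod.dist_eq, Real.dist_eq, ← mul_sub, abs_mul]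
    refine max_le ?_ ?_
    · nlinarith [le_max_left 1 M, le_max_right |p.1 - q.1| |p.2 - q.2|, abs_nonneg (p.2 - q.2)]
    · nlinarith [le_max_left |p.1 - q.1| |p.2 - q.2|, abs_nonneg (p.1 - q.1), abs_nonneg (k t)]
  set F : ℝ → ℝ × ℝ := fun t => (f t, g t)
  have hF : ∀ t ∈ Icc a b, HasDerivAt F (v t (F t)) t := fun t ht => (hf t ht).prodMk (hg t ht)
  have hFc : ContinuousOn F (Icc a b) := fun t ht => (hF t ht).continuousAt.continuousWithinAt
  have hv0 (t : ℝ) : v t 0 = 0 := by simp [v]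
  have h0 (t : ℝ) : HasDerivAt (fun _ => (0 : ℝ × ℝ)) (v t 0) t := by
    rw [hv0]
    exact hasDerivAt_const t _
  have hFx₀ : F x₀ = 0 := by simp [F, hf₀, hg₀]
  have hleft : EqOn F 0 (Icc a x₀) := by
    have hsub : Icc a x₀ ⊆ Icc a b := Icc_subset_Icc_right hx₀.2
    exact ODE_solution_unique_of_mem_Icc_left (fun t ht => hv t (hsub (Ioc_subset_Icc_self ht)))
      (hFc.mono hsub) (fun t ht => (hF t (hsub (Ioc_subset_Icc_self ht))).hasDerivWithinAt)
      (fun _ _ => mem_univ _) continuousOn_const (fun t _ => (h0 t).hasDerivWithinAt)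
      (fun _ _ => mem_univ _) hFx₀
  have hright : EqOn F 0 (Icc x₀ b) := by
    have hsub : Icc x₀ b ⊆ Icc a b := Icc_subset_Icc_left hx₀.1
    exact ODE_solution_unique_of_mem_Icc_right (fun t ht => hv t (hsub (Ico_subset_Icc_self ht)))
      (hFc.mono hsub) (fun t ht => (hF t (hsub (Ico_subset_Icc_self ht))).hasDerivWithinAt)
      (fun _ _ => mem_univ _) continuousOn_const (fun t _ => (h0 t).hasDerivWithinAt)
      (fun _ _ => mem_univ _) hFx₀
  intro x hx
  rcases le_total x x₀ with h | h
  · exact congrArg Prod.fst (hleft ⟨hx.1, h⟩)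
  · exact congrArg Prod.fst (hright ⟨h, hx.2⟩)

section SecondOrder

variable {f g k : ℝ → ℝ} {a b : ℝ}

theorem pos_of_hasDerivAt_of_coeff_pos (hab : a < b) (hf : ∀ x ∈ Icc a b, HasDerivAt f (g x) x)
    (hg : ∀ x ∈ Icc a b, HasDerivAt g (k x * f x) x) (hk : ∀ x ∈ Icc a b, 0 < k x)
    (hfa : 0 < f a) (hga : g a = 0) : (∀ x ∈ Icc a b, 0 < f x) ∧ 0 < g b := by
  -- `(f g)' = g² + k f² ≥ 0` gives `f g ≥ 0`, i.e. `(f²)' ≥ 0`, so `f` never vanishes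
  have hfg : ∀ x ∈ Icc a b, 0 ≤ f x * g x := by
    have hmono : MonotoneOn (fun x => f x * g x) (Icc a b) :=
      monotoneOn_Icc_of_hasDerivAt (fun x hx => (hf x hx).mul (hg x hx)) fun x hx => by
        nlinarith [hk x (Ioo_subset_Icc_self hx), mul_self_nonneg (g x), mul_self_nonneg (f x)]
    intro x hx
    simpa [hga] using hmono (left_mem_Icc.mpr hab.le) hx hx.1
  have hsq : ∀ x ∈ Icc a b, f a ^ 2 ≤ f x ^ 2 := by
    have hmono : MonotoneOn (fun x => f x ^ 2) (Icc a b) :=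
      monotoneOn_Icc_of_hasDerivAt (fun x hx => (hf x hx).pow 2) fun x hx => by
        have := hfg x (Ioo_subset_Icc_self hx)
        simp only [Nat.cast_ofNat, Nat.add_one_sub_one, pow_one]
        linarith
    exact fun x hx => hmono (left_mem_Icc.mpr hab.le) hx hx.1
  have hpos : ∀ x ∈ Icc a b, 0 < f x := by
    intro x hx
    by_contra! hfx
    obtain ⟨y, hy, hy0⟩ := intermediate_value_Icc' hx.1
      ((HasDerivAt.continuousOn hf).mono (Icc_subset_Icc_right hx.2)) ⟨hfx, hfa.le⟩
    have := hsq y ⟨hy.1, hy.2.trans hx.2⟩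
    rw [hy0] at this
    nlinarith
  refine ⟨hpos, ?_⟩
  have hmono : StrictMonoOn g (Icc a b) := strictMonoOn_Icc_of_hasDerivAt hg fun x hx =>
    mul_pos (hk x (Ioo_subset_Icc_self hx)) (hpos x (Ioo_subset_Icc_self hx))
  simpa [hga] using hmono (left_mem_Icc.mpr hab.le) (right_mem_Icc.mpr hab.le) hab

theorem exists_nonpos_of_coeff_le_neg_sq {m : ℝ} (hab : a < b) (hm : m * (b - a) = Real.pi / 2)
    (hf : ∀ x ∈ Icc a b, HasDerivAt f (g x) x) (hg : ∀ x ∈ Icc a b, HasDerivAt g (k x * f x) x)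
    (hk : ∀ x ∈ Icc a b, k x ≤ -m ^ 2) (hga : g a = 0) : ∃ x ∈ Icc a b, f x ≤ 0 := by
  by_contra! hpos
  have hm₀ : 0 < m := pos_of_mul_pos_left (hm ▸ Real.pi_div_two_pos) (sub_pos.mpr hab).le
  have hy (x : ℝ) :
      HasDerivAt (fun x => Real.cos (m * (x - a))) (-(m * Real.sin (m * (x - a)))) x := by
    simpa [mul_comm] using (((hasDerivAt_id x).sub_const a).const_mul m).cos
  have hy' (x : ℝ) : HasDerivAt (fun x => -(m * Real.sin (m * (x - a))))
      (-m ^ 2 * Real.cos (m * (x - a))) x :=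
    ((((hasDerivAt_id x).sub_const a).const_mul m).sin.const_mul m).neg.congr_deriv (by simp; ring)
  have hcos : ∀ x ∈ Icc a b, 0 ≤ Real.cos (m * (x - a)) := fun x hx => by
    refine Real.cos_nonneg_of_mem_Icc ⟨by nlinarith [Real.pi_pos, hx.1], ?_⟩
    rw [← hm]
    nlinarith [hx.2]
  -- the Wronskian of `f` with the comparison solution `cos (m (x - a))` of `y'' = -m² y`
  set W := fun x => g x * Real.cos (m * (x - a)) - f x * -(m * Real.sin (m * (x - a)))
  have hW : AntitoneOn W (Icc a b) := by
    refine antitoneOn_Icc_of_hasDerivAt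
      (fun x hx => ((hg x hx).mul (hy x)).sub ((hf x hx).mul (hy' x))) fun x hx => ?_
    have hx' := Ioo_subset_Icc_self hx
    nlinarith [hk x hx', mul_nonneg (hpos x hx').le (hcos x hx')]
  have hWab := hW (left_mem_Icc.mpr hab.le) (right_mem_Icc.mpr hab.le) hab.le
  have hWb : W b = m * f b := by simp [W, hm, mul_comm]
  simp only [W, hga, sub_self, mul_zero, Real.sin_zero, neg_zero, zero_mul, hWb] at hWab
  nlinarith [hpos b (right_mem_Icc.mpr hab.le)]

end SecondOrder

theorem integral_sub_mul_mul_eq_zero_of_neumann {f₁ g₁ k₁ f₂ g₂ k₂ : ℝ → ℝ} {a b : ℝ} (hab : a ≤ b)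
    (hk₁ : ContinuousOn k₁ (Icc a b)) (hk₂ : ContinuousOn k₂ (Icc a b))
    (hf₁ : ∀ x ∈ Icc a b, HasDerivAt f₁ (g₁ x) x)
    (hg₁ : ∀ x ∈ Icc a b, HasDerivAt g₁ (k₁ x * f₁ x) x)
    (hf₂ : ∀ x ∈ Icc a b, HasDerivAt f₂ (g₂ x) x)
    (hg₂ : ∀ x ∈ Icc a b, HasDerivAt g₂ (k₂ x * f₂ x) x)
    (ha₁ : g₁ a = 0) (hb₁ : g₁ b = 0) (ha₂ : g₂ a = 0) (hb₂ : g₂ b = 0) :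
    ∫ x in a..b, (k₁ x - k₂ x) * (f₁ x * f₂ x) = 0 := by
  rw [← uIcc_of_le hab] at hk₁ hk₂ hf₁ hg₁ hf₂ hg₂
  -- the Wronskian `g₁ f₂ - f₁ g₂` is an antiderivative of the integrand
  have hW : ∀ x ∈ uIcc a b, HasDerivAt (fun x => g₁ x * f₂ x - f₁ x * g₂ x)
      ((k₁ x - k₂ x) * (f₁ x * f₂ x)) x := fun x hx =>
    (((hg₁ x hx).mul (hf₂ x hx)).sub ((hf₁ x hx).mul (hg₂ x hx))).congr_deriv (by ring)
  rw [intervalIntegral.integral_eq_sub_of_hasDerivAt hW (ContinuousOn.intervalIntegrable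
    ((hk₁.sub hk₂).mul ((HasDerivAt.continuousOn hf₁).mul (HasDerivAt.continuousOn hf₂))))]
  simp [ha₁, hb₁, ha₂, hb₂]

theorem isOpen_setOf_forall_pos {X : Type*} [TopologicalSpace X] {F : X → ℝ → ℝ}
    (hF : Continuous fun q : X × ℝ => F q.1 q.2) {K : Set ℝ} (hK : IsCompact K) :
    IsOpen {p | ∀ x ∈ K, 0 < F p x} :=
  isOpen_iff_mem_nhds.mpr fun _ hp => hK.eventually_forall_of_forall_eventually fun y hy =>
    (isOpen_lt continuous_const hF).mem_nhds (hp y hy)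

theorem shooting_exists_pos_neumann {a b : ℝ} {V : ℝ → ℝ} {P P' : ℝ → ℝ → ℝ} (hab : a < b)
    (hV : ContinuousOn V (Icc a b)) (hPc : Continuous fun q : ℝ × ℝ => P q.1 q.2)
    (hP'c : Continuous fun β => P' β b) (hP : ∀ β, ∀ x ∈ Icc a b, HasDerivAt (P β) (P' β x) x)
    (hP' : ∀ β, ∀ x ∈ Icc a b, HasDerivAt (P' β) ((V x + β) * P β x) x)
    (ha : ∀ β, 0 < P β a) (ha' : ∀ β, P' β a = 0) :
    ∃ β, (∀ x ∈ Icc a b, 0 < P β x) ∧ P' β b = 0 := by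
  obtain ⟨M, hM⟩ := isCompact_Icc.exists_bound_of_continuousOn hV
  have hVM : ∀ x ∈ Icc a b, |V x| ≤ M := hM
  set S := {β | (∀ x ∈ Icc a b, 0 < P β x) ∧ 0 < P' β b}
  have hS_open : IsOpen S :=
    (isOpen_setOf_forall_pos hPc isCompact_Icc).inter (isOpen_lt continuous_const hP'c)
  have hS_ne : M + 1 ∈ S := pos_of_hasDerivAt_of_coeff_pos hab (hP _) (hP' _)
    (fun x hx => by linarith [neg_abs_le (V x), hVM x hx]) (ha _) (ha' _)
  set m := Real.pi / (2 * (b - a))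
  have hm : m * (b - a) = Real.pi / 2 := by
    simp only [m]
    field_simp [(sub_pos.mpr hab).ne']
  have hS_bdd : ∀ β ∈ S, -m ^ 2 - M ≤ β := by
    intro β hβ
    by_contra! hβm
    obtain ⟨x, hx, hPx⟩ := exists_nonpos_of_coeff_le_neg_sq hab hm (hP β) (hP' β)
      (fun x hx => by linarith [le_abs_self (V x), hVM x hx]) (ha' β)
    exact (hβ.1 x hx).not_ge hPx
  set β₀ := sInf S
  have hβ₀ : β₀ ∈ closure S := csInf_mem_closure ⟨_, hS_ne⟩ ⟨_, hS_bdd⟩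
  have hnonneg : ∀ x ∈ Icc a b, 0 ≤ P β₀ x := fun x hx =>
    closure_minimal (fun β hβ => (hβ.1 x hx).le)
      (isClosed_le continuous_const (hPc.comp (continuous_id.prodMk continuous_const))) hβ₀
  have hb' : 0 ≤ P' β₀ b :=
    closure_minimal (fun β hβ => hβ.2.le) (isClosed_le continuous_const hP'c) hβ₀
  have hpos : ∀ x ∈ Icc a b, 0 < P β₀ x := by
    intro x hx
    by_contra! hx0
    have hx0 : P β₀ x = 0 := le_antisymm hx0 (hnonneg x hx)
    have hmin : IsMinOn (P β₀) (Icc a b) x := fun y hy => by simpa [hx0] using hnonneg y hy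
    have hxa : a < x := hx.1.lt_of_ne (by rintro rfl; exact (ha β₀).ne' hx0)
    -- at a zero of the nonnegative function `P β₀`, its derivative vanishes too
    have hderiv : P' β₀ x = 0 := by
      refine le_antisymm (hmin.hasDerivAt_nonpos_of_mem_Ioc (hP β₀ x hx) ⟨hxa, hx.2⟩) ?_
      rcases hx.2.lt_or_eq with hxb | rfl
      · exact hmin.hasDerivAt_nonneg_of_mem_Ico (hP β₀ x hx) ⟨hx.1, hxb⟩
      · exact hb'
    have := eqOn_zero_of_hasDerivAt_of_eq_zero (hV.add continuousOn_const) (hP β₀) (hP' β₀) hx hx0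
      hderiv (left_mem_Icc.mpr hab.le)
    exact (ha β₀).ne' this
  refine ⟨β₀, hpos, ?_⟩
  by_contra hne
  obtain ⟨β, hβ, hβS⟩ := Eventually.exists_lt (hS_open.mem_nhds ⟨hpos, hb'.lt_of_ne' hne⟩)
  exact (csInf_le ⟨_, hS_bdd⟩ hβS).not_gt hβ

lemma contDiff_two_of_hasDerivAt {f f' f'' : ℝ → ℝ} (hf : ∀ x, HasDerivAt f (f' x) x)
    (hf' : ∀ x, HasDerivAt f' (f'' x) x) (hf'' : Continuous f'') : ContDiff ℝ 2 f := by
  have hderiv : deriv f = f' := funext fun x => (hf x).deriv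
  have hderiv' : deriv f' = f'' := funext fun x => (hf' x).deriv
  refine contDiff_succ_iff_deriv (n := 1).mpr ⟨fun x => (hf x).differentiableAt, by simp, ?_⟩
  rw [hderiv]
  exact contDiff_one_iff_deriv.mpr ⟨fun x => (hf' x).differentiableAt, hderiv' ▸ hf''⟩

lemma iteratedDeriv_two_of_hasDerivAt {f f' f'' : ℝ → ℝ} (hf : ∀ x, HasDerivAt f (f' x) x)
    (hf' : ∀ x, HasDerivAt f' (f'' x) x) : iteratedDeriv 2 f = f'' := by
  rw [iteratedDeriv_succ, iteratedDeriv_one, funext fun x => (hf x).deriv]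
  exact funext fun x => (hf' x).deriv

noncomputable def spectralCoeff (alpha r lam c θ : ℝ) : ℝ := (lam * c - r - θ * lam ^ 2) / alpha

lemma continuous_spectralCoeff (alpha r lam c : ℝ) : Continuous (spectralCoeff alpha r lam c) := by
  unfold spectralCoeff
  fun_prop

namespace IsSpectralPair

variable {a b alpha r lam c : ℝ} {Q : ℝ → ℝ}

lemma hasDerivAt (h : IsSpectralPair a b alpha r lam c Q) (θ : ℝ) : HasDerivAt Q (deriv Q θ) θ :=
  (h.1.differentiable (by norm_num) θ).hasDerivAt

lemma hasDerivAt_deriv (h : IsSpectralPair a b alpha r lam c Q) (hab : a < b) (halpha : alpha ≠ 0) :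
    ∀ θ ∈ Icc a b, HasDerivAt (deriv Q) (spectralCoeff alpha r lam c θ * Q θ) θ := by
  obtain ⟨hQ, -, -, hode, -, -⟩ := h
  have hQ₂ : Continuous (iteratedDeriv 2 Q) := hQ.continuous_iteratedDeriv 2 le_rfl
  have hQ₁ : Differentiable ℝ (deriv Q) := by
    simpa using hQ.differentiable_iteratedDeriv 1 (by norm_num)
  have hEq : EqOn (iteratedDeriv 2 Q) (fun θ => spectralCoeff alpha r lam c θ * Q θ) (Icc a b) := by
    refine EqOn.of_subset_closure (s := Ioo a b) (fun θ hθ => ?_) hQ₂.continuousOn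
      ((continuous_spectralCoeff _ _ _ _).mul hQ.continuous).continuousOn Ioo_subset_Icc_self
      (closure_Ioo hab.ne).ge
    have := hode θ hθ
    simp only [spectralCoeff]
    field_simp
    linarith
  intro θ hθ
  have h₂ : iteratedDeriv 2 Q θ = spectralCoeff alpha r lam c θ * Q θ := hEq hθ
  rw [iteratedDeriv_succ, iteratedDeriv_one] at h₂
  exact h₂ ▸ (hQ₁ θ).hasDerivAt

theorem unique {c₁ c₂ : ℝ} {Q₁ Q₂ : ℝ → ℝ} (h₁ : IsSpectralPair a b alpha r lam c₁ Q₁)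
    (h₂ : IsSpectralPair a b alpha r lam c₂ Q₂) (hab : a < b) (halpha : alpha ≠ 0)
    (hlam : lam ≠ 0) :
    c₁ = c₂ ∧ ∀ θ ∈ Icc a b, Q₁ θ = Q₂ θ := by
  have hd₁ := h₁.hasDerivAt
  have hd₂ := h₂.hasDerivAt
  have hQ₁ := h₁.hasDerivAt_deriv hab halpha
  have hQ₂ := h₂.hasDerivAt_deriv hab halpha
  obtain ⟨hC₁, hpos₁, hint₁, -, ha₁, hb₁⟩ := h₁
  obtain ⟨hC₂, hpos₂, hint₂, -, ha₂, hb₂⟩ := h₂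
  have hc : c₁ = c₂ := by
    have hW := integral_sub_mul_mul_eq_zero_of_neumann hab.le
      (continuous_spectralCoeff alpha r lam c₁).continuousOn
      (continuous_spectralCoeff alpha r lam c₂).continuousOn
      (fun θ _ => hd₁ θ) hQ₁ (fun θ _ => hd₂ θ) hQ₂ ha₁ hb₁ ha₂ hb₂
    have hsub (θ : ℝ) : spectralCoeff alpha r lam c₁ θ - spectralCoeff alpha r lam c₂ θ
        = lam * (c₁ - c₂) / alpha := by
      simp only [spectralCoeff]
      ring
    simp only [hsub, intervalIntegral.integral_const_mul] at hW
    have hpos : 0 < ∫ θ in a..b, Q₁ θ * Q₂ θ :=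
      intervalIntegral.intervalIntegral_pos_of_pos_on
        ((hC₁.continuous.mul hC₂.continuous).intervalIntegrable a b)
        (fun θ hθ => mul_pos (hpos₁ θ (Ioo_subset_Icc_self hθ)) (hpos₂ θ (Ioo_subset_Icc_self hθ)))
        hab
    have := (mul_eq_zero.mp hW).resolve_right hpos.ne'
    simpa [hlam, halpha, sub_eq_zero] using this
  subst hc
  set κ := Q₁ a / Q₂ a
  have hQ : EqOn (fun θ => Q₁ θ - κ * Q₂ θ) 0 (Icc a b) :=
    eqOn_zero_of_hasDerivAt_of_eq_zero (continuous_spectralCoeff alpha r lam c₁).continuousOn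
      (fun θ _ => (hd₁ θ).sub ((hd₂ θ).const_mul κ))
      (fun θ hθ => ((hQ₁ θ hθ).sub ((hQ₂ θ hθ).const_mul κ)).congr_deriv (by ring))
      (left_mem_Icc.mpr hab.le)
      (by simp [κ, div_mul_cancel₀ _ (hpos₂ a (left_mem_Icc.mpr hab.le)).ne'])
      (by simp [ha₁, ha₂])
  have hκ : κ = 1 := by
    have : ∫ θ in Ioo a b, Q₁ θ = κ * ∫ θ in Ioo a b, Q₂ θ := by
      rw [← integral_const_mul]
      exact setIntegral_congr_fun measurableSet_Ioo fun θ hθ =>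
        sub_eq_zero.mp (hQ (Ioo_subset_Icc_self hθ))
    rwa [hint₁, hint₂, mul_one, eq_comm] at this
  exact ⟨rfl, fun θ hθ => by simpa [hκ, sub_eq_zero] using hQ hθ⟩

theorem of_pos_of_neumann {P P' : ℝ → ℝ} (hab : a < b) (halpha : alpha ≠ 0)
    (hP : ∀ x, HasDerivAt P (P' x) x)
    (hP' : ∀ x, HasDerivAt P' (spectralCoeff alpha r lam c x * P x) x)
    (hpos : ∀ x ∈ Icc a b, 0 < P x) (ha : P' a = 0) (hb : P' b = 0) :
    IsSpectralPair a b alpha r lam c fun x => (∫ y in Ioo a b, P y)⁻¹ * P x := by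
  have hPc : Continuous P := continuous_iff_continuousAt.mpr fun x => (hP x).continuousAt
  have hJ : 0 < ∫ y in Ioo a b, P y := by
    rw [← integral_Ioc_eq_integral_Ioo, ← intervalIntegral.integral_of_le hab.le]
    exact intervalIntegral.intervalIntegral_pos_of_pos_on (hPc.intervalIntegrable a b)
      (fun x hx => hpos x (Ioo_subset_Icc_self hx)) hab
  set J := ∫ y in Ioo a b, P y
  have hQ (x : ℝ) : HasDerivAt (fun x => J⁻¹ * P x) (J⁻¹ * P' x) x := (hP x).const_mul _
  have hQ' (x : ℝ) :
      HasDerivAt (fun x => J⁻¹ * P' x) (J⁻¹ * (spectralCoeff alpha r lam c x * P x)) x :=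
    (hP' x).const_mul _
  have hderiv : deriv (fun x => J⁻¹ * P x) = fun x => J⁻¹ * P' x := funext fun x => (hQ x).deriv
  refine ⟨contDiff_two_of_hasDerivAt hQ hQ' ?_, fun x hx => mul_pos (inv_pos.mpr hJ) (hpos x hx),
    ?_, fun θ _ => ?_, by simp [hderiv, ha], by simp [hderiv, hb]⟩
  · exact continuous_const.mul ((continuous_spectralCoeff alpha r lam c).mul hPc)
  · rw [integral_const_mul, inv_mul_cancel₀ hJ.ne']
  · rw [iteratedDeriv_two_of_hasDerivAt hQ hQ']
    simp only [spectralCoeff]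
    field_simp
    ring

end IsSpectralPair

lemma spectralCoeff_eq_add {alpha r lam : ℝ} (halpha : alpha ≠ 0) (hlam : lam ≠ 0) (a β x : ℝ) :
    spectralCoeff alpha r lam ((alpha * β + r + a * lam ^ 2) / lam) x
      = -lam ^ 2 / alpha * (x - a) + β := by
  simp only [spectralCoeff]
  field_simp
  ring

theorem statement1_general (thmin thmax alpha r : ℝ)
    (hthth : thmin < thmax) (halpha : 0 < alpha)
    (lam : ℝ) (hlam : 0 < lam) :
    (∃ (c : ℝ) (Q : ℝ → ℝ), IsSpectralPair thmin thmax alpha r lam c Q) ∧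
    (∀ (c₁ c₂ : ℝ) (Q₁ Q₂ : ℝ → ℝ),
      IsSpectralPair thmin thmax alpha r lam c₁ Q₁ →
      IsSpectralPair thmin thmax alpha r lam c₂ Q₂ →
      c₁ = c₂ ∧ ∀ θ ∈ Set.Icc thmin thmax, Q₁ θ = Q₂ θ) := by
  refine ⟨?_, fun c₁ c₂ Q₁ Q₂ h₁ h₂ => h₁.unique h₂ hthth halpha.ne' hlam.ne'⟩
  set A := -lam ^ 2 / alpha
  obtain ⟨β, hpos, hb⟩ := shooting_exists_pos_neumann (V := fun x => A * (x - thmin)) hthth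
    (by fun_prop) (continuous_powerSeriesSum_airyCoeffs A thmin)
    ((continuous_powerSeriesSum_derivCoeffs_airyCoeffs A thmin).comp
      (continuous_id.prodMk continuous_const))
    (fun β x _ => hasDerivAt_powerSeriesSum_airyCoeffs A thmin β x)
    (fun β x _ => hasDerivAt_powerSeriesSum_derivCoeffs_airyCoeffs A thmin β x)
    (fun β => (powerSeriesSum_airyCoeffs_self A thmin β).symm ▸ one_pos)
    (powerSeriesSum_derivCoeffs_airyCoeffs_self A thmin)
  refine ⟨(alpha * β + r + thmin * lam ^ 2) / lam, _, IsSpectralPair.of_pos_of_neumann hthth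
    halpha.ne' (hasDerivAt_powerSeriesSum_airyCoeffs A thmin β) (fun x => ?_) hpos
    (powerSeriesSum_derivCoeffs_airyCoeffs_self A thmin β) hb⟩
  rw [spectralCoeff_eq_add halpha.ne' hlam.ne']
  exact hasDerivAt_powerSeriesSum_derivCoeffs_airyCoeffs A thmin β x

theorem statement1 (thmin thmax alpha r : ℝ)
    (hth : 0 < thmin) (hthth : thmin < thmax) (halpha : 0 < alpha) (hr : 0 < r)
    (lam : ℝ) (hlam : 0 < lam) :
    (∃ (c : ℝ) (Q : ℝ → ℝ), IsSpectralPair thmin thmax alpha r lam c Q) ∧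
    (∀ (c₁ c₂ : ℝ) (Q₁ Q₂ : ℝ → ℝ),
      IsSpectralPair thmin thmax alpha r lam c₁ Q₁ →
      IsSpectralPair thmin thmax alpha r lam c₂ Q₂ →
      c₁ = c₂ ∧ ∀ θ ∈ Set.Icc thmin thmax, Q₁ θ = Q₂ θ) :=
  statement1_general thmin thmax alpha r hthth halpha lam hlam
end

section
/- Let λ > 0 and let (c, Q) be a spectral pair at λ. Then λ² θmin + r ≤ λ c ≤ λ² θmax + r; setting θ₀ = (λ c − r)/λ², which lies in [θmin, θmax], one has Q''(θ) ≥ 0 for all θ ∈ [θmin, θ₀] and Q''(θ) ≤ 0 for all θ ∈ [θ₀, θmax]; and Q'(θ) > 0 for every θ ∈ (θmin, θmax), so that Q is increasing on [θmin, θmax]. -/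
open Set Filter MeasureTheory

/-!
With `θ₀ = (λc - r)/λ²` the equation reads `α Q'' = λ² (θ₀ - θ) Q`, so, `Q` being positive,
`Q''` has the sign of `θ₀ - θ`. Rolle's theorem applied to `Q'`, which vanishes at both ends,
gives a zero of `Q''` inside `Θ`, and that zero can only be `θ₀`. Hence `Q'` increases from
`Q'(θmin) = 0` up to `θ₀` and then decreases to `Q'(θmax) = 0`, so it is positive in between.
-/

theorem pos_of_deriv_sign_change {g : ℝ → ℝ} {a b t x : ℝ} (hg : ContinuousOn g (Icc a b))
    (ha : 0 ≤ g a) (hb : 0 ≤ g b) (hlt : ∀ y ∈ Ioo a b, y < t → 0 < deriv g y)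
    (hgt : ∀ y ∈ Ioo a b, t < y → deriv g y < 0) (hx : x ∈ Ioo a b) : 0 < g x := by
  rcases le_total x t with hxt | htx
  · have hmono : StrictMonoOn g (Icc a x) :=
      strictMonoOn_of_deriv_pos (convex_Icc a x) (hg.mono (Icc_subset_Icc_right hx.2.le))
        fun y hy => by
          rw [interior_Icc] at hy
          exact hlt y ⟨hy.1, hy.2.trans hx.2⟩ (hy.2.trans_le hxt)
    exact ha.trans_lt (hmono (left_mem_Icc.2 hx.1.le) (right_mem_Icc.2 hx.1.le) hx.1)
  · have hanti : StrictAntiOn g (Icc x b) :=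
      strictAntiOn_of_deriv_neg (convex_Icc x b) (hg.mono (Icc_subset_Icc_left hx.1.le))
        fun y hy => by
          rw [interior_Icc] at hy
          exact hgt y ⟨hx.1.trans hy.1, hy.2⟩ (htx.trans_lt hy.1)
    exact hb.trans_lt (hanti (left_mem_Icc.2 hx.2.le) (right_mem_Icc.2 hx.2.le) hx.2)

theorem deriv_deriv_eq_iteratedDeriv_two {𝕜 F : Type*} [NontriviallyNormedField 𝕜]
    [NormedAddCommGroup F] [NormedSpace 𝕜 F] (f : 𝕜 → F) :
    deriv (deriv f) = iteratedDeriv 2 f := by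
  rw [iteratedDeriv_succ', iteratedDeriv_one]

noncomputable def turningPoint (lam c r : ℝ) : ℝ := (lam * c - r) / lam ^ 2

namespace IsSpectralPair

variable {thmin thmax alpha r lam c : ℝ} {Q : ℝ → ℝ}

theorem iteratedDeriv_two_eq (hQ : IsSpectralPair thmin thmax alpha r lam c Q)
    (hlt : thmin < thmax) (halpha : alpha ≠ 0) (hlam : lam ≠ 0) {θ : ℝ}
    (hθ : θ ∈ Icc thmin thmax) :
    iteratedDeriv 2 Q θ = lam ^ 2 / alpha * Q θ * (turningPoint lam c r - θ) := by
  obtain ⟨hC, -, -, hode, -, -⟩ := hQ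
  have hIoo : EqOn (iteratedDeriv 2 Q)
      (fun θ ↦ lam ^ 2 / alpha * Q θ * (turningPoint lam c r - θ)) (Ioo thmin thmax) := by
    intro θ hθ
    unfold turningPoint
    field_simp
    linear_combination hode θ hθ
  have hQc : Continuous Q := hC.continuous
  exact hIoo.closure (hC.continuous_iteratedDeriv 2 le_rfl) (by fun_prop)
    (closure_Ioo hlt.ne ▸ hθ)

theorem turningPoint_mem_Ioo (hQ : IsSpectralPair thmin thmax alpha r lam c Q)
    (hlt : thmin < thmax) (halpha : alpha ≠ 0) (hlam : lam ≠ 0) :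
    turningPoint lam c r ∈ Ioo thmin thmax := by
  obtain ⟨t, ht, hQ''t⟩ := exists_deriv_eq_zero hlt (hQ.1.continuous_deriv one_le_two).continuousOn
    (hQ.2.2.2.2.1.trans hQ.2.2.2.2.2.symm)
  have hQt : Q t ≠ 0 := (hQ.2.1 t (Ioo_subset_Icc_self ht)).ne'
  rw [deriv_deriv_eq_iteratedDeriv_two,
    hQ.iteratedDeriv_two_eq hlt halpha hlam (Ioo_subset_Icc_self ht)] at hQ''t
  have hθ₀ : turningPoint lam c r = t := by simpa [hlam, halpha, hQt, sub_eq_zero] using hQ''t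
  exact hθ₀ ▸ ht

theorem deriv_pos (hQ : IsSpectralPair thmin thmax alpha r lam c Q)
    (hlt : thmin < thmax) (halpha : 0 < alpha) (hlam : lam ≠ 0) {θ : ℝ}
    (hθ : θ ∈ Ioo thmin thmax) : 0 < deriv Q θ := by
  have hcoef : ∀ y ∈ Ioo thmin thmax, 0 < lam ^ 2 / alpha * Q y :=
    fun y hy ↦ mul_pos (by positivity) (hQ.2.1 y (Ioo_subset_Icc_self hy))
  have hQ'' : ∀ y ∈ Ioo thmin thmax,
      deriv (deriv Q) y = lam ^ 2 / alpha * Q y * (turningPoint lam c r - y) := fun y hy ↦ by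
    rw [deriv_deriv_eq_iteratedDeriv_two,
      hQ.iteratedDeriv_two_eq hlt halpha.ne' hlam (Ioo_subset_Icc_self hy)]
  refine pos_of_deriv_sign_change (t := turningPoint lam c r)
    (hQ.1.continuous_deriv one_le_two).continuousOn hQ.2.2.2.2.1.ge hQ.2.2.2.2.2.ge
    (fun y hy hyt ↦ ?_) (fun y hy hty ↦ ?_) hθ
  · rw [hQ'' y hy]
    exact mul_pos (hcoef y hy) (sub_pos.2 hyt)
  · rw [hQ'' y hy]
    exact mul_neg_of_pos_of_neg (hcoef y hy) (sub_neg.2 hty)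

end IsSpectralPair

theorem statement3_general (thmin thmax alpha r : ℝ)
    (hthth : thmin < thmax) (halpha : 0 < alpha)
    (lam c : ℝ) (hlam : 0 < lam) (Q : ℝ → ℝ)
    (hQ : IsSpectralPair thmin thmax alpha r lam c Q) :
    lam ^ 2 * thmin + r ≤ lam * c ∧ lam * c ≤ lam ^ 2 * thmax + r ∧
    (lam * c - r) / lam ^ 2 ∈ Set.Icc thmin thmax ∧
    (∀ θ ∈ Set.Icc thmin ((lam * c - r) / lam ^ 2), 0 ≤ iteratedDeriv 2 Q θ) ∧
    (∀ θ ∈ Set.Icc ((lam * c - r) / lam ^ 2) thmax, iteratedDeriv 2 Q θ ≤ 0) ∧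
    (∀ θ ∈ Set.Ioo thmin thmax, 0 < deriv Q θ) ∧
    StrictMonoOn Q (Set.Icc thmin thmax) := by
  have hθ₀ := hQ.turningPoint_mem_Ioo hthth halpha.ne' hlam.ne'
  have hbounds := hθ₀
  rw [turningPoint, mem_Ioo, lt_div_iff₀ (by positivity), div_lt_iff₀ (by positivity)] at hbounds
  have hQ' : ∀ θ ∈ Ioo thmin thmax, 0 < deriv Q θ :=
    fun θ hθ ↦ hQ.deriv_pos hthth halpha hlam.ne' hθ
  have hcoef : ∀ θ ∈ Icc thmin thmax, 0 ≤ lam ^ 2 / alpha * Q θ :=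
    fun θ hθ ↦ mul_nonneg (by positivity) (hQ.2.1 θ hθ).le
  refine ⟨by linarith, by linarith, Ioo_subset_Icc_self hθ₀, fun θ hθ ↦ ?_, fun θ hθ ↦ ?_, hQ',
    strictMonoOn_of_deriv_pos (convex_Icc _ _) hQ.1.continuous.continuousOn (by rwa [interior_Icc])⟩
  · have hθ' : θ ∈ Icc thmin thmax := ⟨hθ.1, hθ.2.trans hθ₀.2.le⟩
    rw [hQ.iteratedDeriv_two_eq hthth halpha.ne' hlam.ne' hθ']
    exact mul_nonneg (hcoef θ hθ') (sub_nonneg.2 hθ.2)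
  · have hθ' : θ ∈ Icc thmin thmax := ⟨hθ₀.1.le.trans hθ.1, hθ.2⟩
    rw [hQ.iteratedDeriv_two_eq hthth halpha.ne' hlam.ne' hθ']
    exact mul_nonpos_of_nonneg_of_nonpos (hcoef θ hθ') (sub_nonpos.2 hθ.1)

theorem statement3 (thmin thmax alpha r : ℝ)
    (hth : 0 < thmin) (hthth : thmin < thmax) (halpha : 0 < alpha) (hr : 0 < r)
    (lam c : ℝ) (hlam : 0 < lam) (Q : ℝ → ℝ)
    (hQ : IsSpectralPair thmin thmax alpha r lam c Q) :
    lam ^ 2 * thmin + r ≤ lam * c ∧ lam * c ≤ lam ^ 2 * thmax + r ∧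
    (lam * c - r) / lam ^ 2 ∈ Set.Icc thmin thmax ∧
    (∀ θ ∈ Set.Icc thmin ((lam * c - r) / lam ^ 2), 0 ≤ iteratedDeriv 2 Q θ) ∧
    (∀ θ ∈ Set.Icc ((lam * c - r) / lam ^ 2) thmax, iteratedDeriv 2 Q θ ≤ 0) ∧
    (∀ θ ∈ Set.Ioo thmin thmax, 0 < deriv Q θ) ∧
    StrictMonoOn Q (Set.Icc thmin thmax) :=
  statement3_general thmin thmax alpha r hthth halpha lam c hlam Q hQ
end

section
/- Let λ > 0 and let (c, Q) be a spectral pair at λ, and set ⟨θ⟩ = ∫_Θ θ Q(θ) dθ. Then ⟨θ⟩ = (θmax + θmin)/2 + (α / (λ² |Θ|)) ∫_Θ (Q'(θ)/Q(θ))² dθ; in particular ⟨θ⟩ > (θmax + θmin)/2. -/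
/-!
Write `m = (λc - r) / λ²`, so that the equation reads `α Q'' = λ² (m - θ) Q` on `Θ`. Integrating it
and using `∫ Q = 1` together with `∫ Q'' = Q'(θmax) - Q'(θmin) = 0` gives `⟨θ⟩ = m`. Dividing it by
`Q` first, the Riccati identity `(Q'/Q)' = Q''/Q - (Q'/Q)²` and the Neumann conditions give
`∫ (Q'/Q)² = (λ²/α) ∫_Θ (m - θ) dθ = (λ² |Θ| / α) (m - (θmax + θmin)/2)`. This integral is positive
because `Q'` cannot vanish on all of `Θ`: otherwise `Q'' = 0` there, and the equation would force
`θ = m` throughout `Θ`.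
-/

open Set Filter MeasureTheory

theorem setIntegral_pos_of_continuousOn_of_ne_zero {X : Type*} [TopologicalSpace X]
    [MeasurableSpace X] [OpensMeasurableSpace X] {μ : Measure X} [μ.IsOpenPosMeasure]
    {U : Set X} {f : X → ℝ} {x₀ : X} (hU : IsOpen U) (hf : ContinuousOn f U)
    (hfi : IntegrableOn f U μ) (hnonneg : ∀ x ∈ U, 0 ≤ f x) (hx₀ : x₀ ∈ U) (hfx₀ : f x₀ ≠ 0) :
    0 < ∫ x in U, f x ∂μ := by
  rw [setIntegral_pos_iff_support_of_nonneg_ae (ae_restrict_of_forall_mem hU.measurableSet hnonneg)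
    hfi, inter_comm]
  exact (hf.isOpen_inter_preimage hU isOpen_ne).measure_pos μ ⟨x₀, hx₀, hfx₀⟩

theorem integral_Ioo_eq_sub_of_hasDerivAt {a b : ℝ} {f f' : ℝ → ℝ} (hab : a ≤ b)
    (hderiv : ∀ x ∈ Icc a b, HasDerivAt f (f' x) x) (hf' : ContinuousOn f' (Icc a b)) :
    ∫ x in Ioo a b, f' x = f b - f a := by
  rw [← integral_Ioc_eq_integral_Ioo, ← intervalIntegral.integral_of_le hab]
  rw [← uIcc_of_le hab] at hderiv hf'
  exact intervalIntegral.integral_eq_sub_of_hasDerivAt hderiv hf'.intervalIntegrable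

theorem hasDerivAt_deriv_of_contDiff_two {Q : ℝ → ℝ} (hQ : ContDiff ℝ 2 Q) (x : ℝ) :
    HasDerivAt (deriv Q) (iteratedDeriv 2 Q x) x := by
  rw [iteratedDeriv_succ, iteratedDeriv_one]
  exact ((hQ.iterate_deriv' 1 1).differentiable one_ne_zero x).hasDerivAt

theorem continuousOn_deriv_div_of_contDiff_one {Q : ℝ → ℝ} {s : Set ℝ} (hQ : ContDiff ℝ 1 Q)
    (hQ0 : ∀ x ∈ s, Q x ≠ 0) : ContinuousOn (fun x ↦ deriv Q x / Q x) s :=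
  (hQ.continuous_deriv le_rfl).continuousOn.div hQ.continuous.continuousOn hQ0

theorem integral_Ioo_iteratedDeriv_two {a b : ℝ} {Q : ℝ → ℝ} (hQ : ContDiff ℝ 2 Q)
    (hab : a ≤ b) : ∫ x in Ioo a b, iteratedDeriv 2 Q x = deriv Q b - deriv Q a :=
  integral_Ioo_eq_sub_of_hasDerivAt hab (fun x _ ↦ hasDerivAt_deriv_of_contDiff_two hQ x)
    (hQ.continuous_iteratedDeriv 2 le_rfl).continuousOn

theorem hasDerivAt_deriv_div_of_contDiff_two {Q : ℝ → ℝ} {x : ℝ} (hQ : ContDiff ℝ 2 Q)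
    (hx : Q x ≠ 0) :
    HasDerivAt (fun y ↦ deriv Q y / Q y)
      (iteratedDeriv 2 Q x / Q x - (deriv Q x / Q x) ^ 2) x := by
  refine ((hasDerivAt_deriv_of_contDiff_two hQ x).div
    ((hQ.differentiable two_ne_zero) x).hasDerivAt hx).congr_deriv ?_
  field_simp

theorem integral_Ioo_sq_deriv_div {a b : ℝ} {Q : ℝ → ℝ} (hQ : ContDiff ℝ 2 Q) (hab : a ≤ b)
    (hQ0 : ∀ x ∈ Icc a b, Q x ≠ 0) :
    ∫ x in Ioo a b, (deriv Q x / Q x) ^ 2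
      = (∫ x in Ioo a b, iteratedDeriv 2 Q x / Q x) - (deriv Q b / Q b - deriv Q a / Q a) := by
  have hQ'' : ContinuousOn (fun x ↦ iteratedDeriv 2 Q x / Q x) (Icc a b) :=
    (hQ.continuous_iteratedDeriv 2 le_rfl).continuousOn.div hQ.continuous.continuousOn hQ0
  have hQ' : ContinuousOn (fun x ↦ (deriv Q x / Q x) ^ 2) (Icc a b) :=
    (continuousOn_deriv_div_of_contDiff_one (hQ.of_le one_le_two) hQ0).pow 2
  rw [← integral_Ioo_eq_sub_of_hasDerivAt hab
      (fun x hx ↦ hasDerivAt_deriv_div_of_contDiff_two hQ (hQ0 x hx)) (hQ''.sub hQ'),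
    integral_sub (hQ''.integrableOn_Icc.mono_set Ioo_subset_Icc_self)
      (hQ'.integrableOn_Icc.mono_set Ioo_subset_Icc_self)]
  ring

namespace IsSpectralPair

variable {thmin thmax alpha r lam c : ℝ} {Q : ℝ → ℝ}

theorem alpha_mul_iteratedDeriv_two (hQ : IsSpectralPair thmin thmax alpha r lam c Q) {θ : ℝ}
    (hθ : θ ∈ Ioo thmin thmax) :
    alpha * iteratedDeriv 2 Q θ = (lam * c - r - θ * lam ^ 2) * Q θ := by
  linear_combination hQ.2.2.2.1 θ hθ

theorem integral_id_mul_eq (hQ : IsSpectralPair thmin thmax alpha r lam c Q)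
    (hab : thmin ≤ thmax) (hlam : lam ≠ 0) :
    ∫ θ in Ioo thmin thmax, θ * Q θ = (lam * c - r) / lam ^ 2 := by
  have hθQ : ∫ θ in Ioo thmin thmax, θ * Q θ
      = ∫ θ in Ioo thmin thmax,
          (lam * c - r) / lam ^ 2 * Q θ - alpha / lam ^ 2 * iteratedDeriv 2 Q θ := by
    refine setIntegral_congr_fun measurableSet_Ioo fun θ hθ ↦ ?_
    field_simp
    linear_combination hQ.alpha_mul_iteratedDeriv_two hθ
  obtain ⟨hC2, -, hnorm, -, ha, hb⟩ := hQ
  have hQint : IntegrableOn Q (Ioo thmin thmax) :=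
    hC2.continuous.integrableOn_Icc.mono_set Ioo_subset_Icc_self
  have hQ''int : IntegrableOn (iteratedDeriv 2 Q) (Ioo thmin thmax) :=
    (hC2.continuous_iteratedDeriv 2 le_rfl).integrableOn_Icc.mono_set Ioo_subset_Icc_self
  rw [hθQ, integral_sub (hQint.const_mul _) (hQ''int.const_mul _), integral_const_mul,
    integral_const_mul, hnorm, integral_Ioo_iteratedDeriv_two hC2 hab, ha, hb]
  ring

theorem integral_sq_deriv_div_eq (hQ : IsSpectralPair thmin thmax alpha r lam c Q)
    (hab : thmin ≤ thmax) (halpha : alpha ≠ 0) :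
    ∫ θ in Ioo thmin thmax, (deriv Q θ / Q θ) ^ 2
      = ((lam * c - r) * (thmax - thmin) - lam ^ 2 * (thmax ^ 2 - thmin ^ 2) / 2) / alpha := by
  have hQ''Q : ∫ θ in Ioo thmin thmax, iteratedDeriv 2 Q θ / Q θ
      = ∫ θ in Ioo thmin thmax, (lam * c - r - θ * lam ^ 2) / alpha := by
    refine setIntegral_congr_fun measurableSet_Ioo fun θ hθ ↦ ?_
    have hQθ : Q θ ≠ 0 := (hQ.2.1 θ (Ioo_subset_Icc_self hθ)).ne'
    field_simp
    linear_combination hQ.alpha_mul_iteratedDeriv_two hθ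
  obtain ⟨hC2, hpos, -, -, ha, hb⟩ := hQ
  rw [integral_Ioo_sq_deriv_div hC2 hab fun θ hθ ↦ (hpos θ hθ).ne', hQ''Q, ha, hb,
    ← integral_Ioc_eq_integral_Ioo, ← intervalIntegral.integral_of_le hab]
  simp only [intervalIntegral.integral_div, intervalIntegrable_const,
    intervalIntegral.intervalIntegrable_id, IntervalIntegrable.mul_const,
    intervalIntegral.integral_sub, intervalIntegral.integral_const,
    intervalIntegral.integral_mul_const, integral_id, smul_eq_mul, zero_div, sub_self, sub_zero]
  ring

theorem exists_deriv_ne_zero (hQ : IsSpectralPair thmin thmax alpha r lam c Q)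
    (hab : thmin < thmax) (hlam : lam ≠ 0) : ∃ θ ∈ Ioo thmin thmax, deriv Q θ ≠ 0 := by
  by_contra! hQ'
  have hcoeff : ∀ θ ∈ Ioo thmin thmax, lam * c - r - θ * lam ^ 2 = 0 := by
    intro θ hθ
    have hQ'_loc : deriv Q =ᶠ[nhds θ] fun _ ↦ 0 := eventually_of_mem (isOpen_Ioo.mem_nhds hθ) hQ'
    have hQ'' : iteratedDeriv 2 Q θ = 0 := by
      rw [iteratedDeriv_succ, iteratedDeriv_one, hQ'_loc.deriv_eq, deriv_const]
    have hODE := hQ.alpha_mul_iteratedDeriv_two hθ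
    rw [hQ'', mul_zero, eq_comm, mul_eq_zero] at hODE
    exact hODE.resolve_right (hQ.2.1 θ (Ioo_subset_Icc_self hθ)).ne'
  obtain ⟨θ₁, hθ₁, hθ₁'⟩ := exists_between hab
  obtain ⟨θ₂, hθ₂, hθ₂'⟩ := exists_between hθ₁'
  have hslope : (θ₂ - θ₁) * lam ^ 2 = 0 := by
    linear_combination hcoeff θ₁ ⟨hθ₁, hθ₂.trans hθ₂'⟩ - hcoeff θ₂ ⟨hθ₁.trans hθ₂, hθ₂'⟩
  exact mul_ne_zero (sub_ne_zero.2 hθ₂.ne') (pow_ne_zero 2 hlam) hslope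

theorem integral_sq_deriv_div_pos (hQ : IsSpectralPair thmin thmax alpha r lam c Q)
    (hab : thmin < thmax) (hlam : lam ≠ 0) :
    0 < ∫ θ in Ioo thmin thmax, (deriv Q θ / Q θ) ^ 2 := by
  obtain ⟨θ₀, hθ₀, hQ'θ₀⟩ := hQ.exists_deriv_ne_zero hab hlam
  obtain ⟨hC2, hpos, -⟩ := hQ
  have hQ0 : ∀ θ ∈ Icc thmin thmax, Q θ ≠ 0 := fun θ hθ ↦ (hpos θ hθ).ne'
  have hcont := (continuousOn_deriv_div_of_contDiff_one (hC2.of_le one_le_two) hQ0).pow 2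
  exact setIntegral_pos_of_continuousOn_of_ne_zero isOpen_Ioo (hcont.mono Ioo_subset_Icc_self)
    (hcont.integrableOn_Icc.mono_set Ioo_subset_Icc_self) (fun _ _ ↦ sq_nonneg _) hθ₀
    (pow_ne_zero 2 (div_ne_zero hQ'θ₀ (hQ0 θ₀ (Ioo_subset_Icc_self hθ₀))))

end IsSpectralPair

theorem statement5_general (thmin thmax alpha r : ℝ)
    (hthth : thmin < thmax) (halpha : 0 < alpha)
    (lam c : ℝ) (hlam : 0 < lam) (Q : ℝ → ℝ)
    (hQ : IsSpectralPair thmin thmax alpha r lam c Q) :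
    (∫ θ in Set.Ioo thmin thmax, θ * Q θ)
      = (thmax + thmin) / 2
        + alpha / (lam ^ 2 * (thmax - thmin))
          * ∫ θ in Set.Ioo thmin thmax, (deriv Q θ / Q θ) ^ 2 ∧
    (thmax + thmin) / 2 < ∫ θ in Set.Ioo thmin thmax, θ * Q θ := by
  have hmean := hQ.integral_id_mul_eq hthth.le hlam.ne'
  have hsq := hQ.integral_sq_deriv_div_eq hthth.le halpha.ne'
  have hsq_pos := hQ.integral_sq_deriv_div_pos hthth hlam.ne'
  have hlength : 0 < thmax - thmin := sub_pos.2 hthth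
  have hmean_eq : ∫ θ in Ioo thmin thmax, θ * Q θ
      = (thmax + thmin) / 2
        + alpha / (lam ^ 2 * (thmax - thmin)) * ∫ θ in Ioo thmin thmax, (deriv Q θ / Q θ) ^ 2 := by
    rw [hmean, hsq]
    field_simp
    ring
  refine ⟨hmean_eq, ?_⟩
  rw [hmean_eq, lt_add_iff_pos_right]
  positivity

theorem statement5 (thmin thmax alpha r : ℝ)
    (hth : 0 < thmin) (hthth : thmin < thmax) (halpha : 0 < alpha) (hr : 0 < r)
    (lam c : ℝ) (hlam : 0 < lam) (Q : ℝ → ℝ)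
    (hQ : IsSpectralPair thmin thmax alpha r lam c Q) :
    (∫ θ in Set.Ioo thmin thmax, θ * Q θ)
      = (thmax + thmin) / 2
        + alpha / (lam ^ 2 * (thmax - thmin))
          * ∫ θ in Set.Ioo thmin thmax, (deriv Q θ / Q θ) ^ 2 ∧
    (thmax + thmin) / 2 < ∫ θ in Set.Ioo thmin thmax, θ * Q θ :=
  statement5_general thmin thmax alpha r hthth halpha lam c hlam Q hQ
end

section
/- Let λ > 0 and let (c, Q) be a spectral pair at λ. Then the Q²-weighted mean trait strictly exceeds the Q-weighted mean trait; that is, (∫_Θ θ Q(θ)² dθ) / (∫_Θ Q(θ)² dθ) > ∫_Θ θ Q(θ) dθ. -/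
open Set Filter MeasureTheory

/-!
Integrating the eigen-equation `α Q'' = (λc - r - λ²θ) Q` against `1` and against `Q`, the
Neumann conditions kill the boundary terms and give
`λ² ∫ θ Q = λc - r` (using `∫ Q = 1`) and `λ² ∫ θ Q² = (λc - r) ∫ Q² + α ∫ Q'²`.
Hence `λ² (∫ θ Q² - (∫ θ Q) ∫ Q²) = α ∫ Q'²`, which is positive: if `Q'` vanished on `Θ`, so
would `Q''`, and the equation would force the affine coefficient `λc - r - λ²θ` to vanish on all
of `Θ`, impossible for `λ ≠ 0`.
-/

section NeumannBoundary

variable {f : ℝ → ℝ} {a b : ℝ}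

theorem ContDiff.contDiff_one_deriv_of_two (hf : ContDiff ℝ 2 f) : ContDiff ℝ 1 (deriv f) :=
  hf.iterate_deriv' 1 1

theorem integral_deriv_deriv_eq_zero (hf : ContDiff ℝ 2 f) (ha : deriv f a = 0)
    (hb : deriv f b = 0) : ∫ x in a..b, deriv (deriv f) x = 0 := by
  have hf' := hf.contDiff_one_deriv_of_two
  rw [intervalIntegral.integral_deriv_eq_sub (fun x _ => hf'.differentiable one_ne_zero x)
    ((hf'.continuous_deriv le_rfl).intervalIntegrable _ _), ha, hb, sub_zero]

theorem integral_mul_deriv_deriv_eq_neg_integral_deriv_sq (hf : ContDiff ℝ 2 f)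
    (ha : deriv f a = 0) (hb : deriv f b = 0) :
    ∫ x in a..b, f x * deriv (deriv f) x = -∫ x in a..b, deriv f x ^ 2 := by
  have hf' := hf.contDiff_one_deriv_of_two
  rw [intervalIntegral.integral_mul_deriv_eq_deriv_mul
    (fun x _ => (hf.differentiable two_ne_zero x).hasDerivAt)
    (fun x _ => (hf'.differentiable one_ne_zero x).hasDerivAt)
    ((hf.continuous_deriv one_le_two).intervalIntegrable _ _)
    ((hf'.continuous_deriv le_rfl).intervalIntegrable _ _), ha, hb]
  simp only [mul_zero, sub_zero, zero_sub, sq]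

end NeumannBoundary

theorem integral_Ioo_eq_intervalIntegral {a b : ℝ} (hab : a ≤ b) (f : ℝ → ℝ) :
    ∫ x in Ioo a b, f x = ∫ x in a..b, f x := by
  rw [intervalIntegral.integral_of_le hab, integral_Ioc_eq_integral_Ioo]

theorem integral_sub_mul_id_mul {g : ℝ → ℝ} (hg : Continuous g) (a b k m : ℝ) :
    ∫ x in a..b, (k - m * x) * g x = k * (∫ x in a..b, g x) - m * ∫ x in a..b, x * g x := by
  rw [← intervalIntegral.integral_const_mul, ← intervalIntegral.integral_const_mul,
    ← intervalIntegral.integral_sub ((hg.intervalIntegrable a b).const_mul k)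
      (((by fun_prop : Continuous fun x => x * g x).intervalIntegrable a b).const_mul m)]
  congr 1 with x
  ring

namespace IsSpectralPair

variable {thmin thmax alpha r lam c : ℝ} {Q : ℝ → ℝ}

theorem eqOn_deriv_deriv (hQ : IsSpectralPair thmin thmax alpha r lam c Q) :
    EqOn (fun θ => alpha * deriv (deriv Q) θ) (fun θ => (lam * c - r - lam ^ 2 * θ) * Q θ)
      (Ioo thmin thmax) := by
  intro θ hθ
  have h := hQ.2.2.2.1 θ hθ
  rw [iteratedDeriv_succ, iteratedDeriv_one] at h
  linear_combination h

theorem mean_eq (hQ : IsSpectralPair thmin thmax alpha r lam c Q) (hab : thmin ≤ thmax) :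
    lam ^ 2 * ∫ θ in thmin..thmax, θ * Q θ = lam * c - r := by
  have h : ∫ θ in thmin..thmax, alpha * deriv (deriv Q) θ =
      ∫ θ in thmin..thmax, (lam * c - r - lam ^ 2 * θ) * Q θ :=
    intervalIntegral.integral_congr_Ioo_of_le hab hQ.eqOn_deriv_deriv
  obtain ⟨hC2, -, hnorm, -, hda, hdb⟩ := hQ
  rw [integral_Ioo_eq_intervalIntegral hab] at hnorm
  rw [intervalIntegral.integral_const_mul, integral_deriv_deriv_eq_zero hC2 hda hdb, mul_zero,
    integral_sub_mul_id_mul hC2.continuous, hnorm] at h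
  linarith

theorem sq_moment_eq (hQ : IsSpectralPair thmin thmax alpha r lam c Q) (hab : thmin ≤ thmax) :
    lam ^ 2 * ∫ θ in thmin..thmax, θ * Q θ ^ 2 =
      (lam * c - r) * (∫ θ in thmin..thmax, Q θ ^ 2) +
        alpha * ∫ θ in thmin..thmax, deriv Q θ ^ 2 := by
  have h : ∫ θ in thmin..thmax, Q θ * (alpha * deriv (deriv Q) θ) =
      ∫ θ in thmin..thmax, (lam * c - r - lam ^ 2 * θ) * Q θ ^ 2 :=
    intervalIntegral.integral_congr_Ioo_of_le hab fun θ hθ => by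
      simp only [hQ.eqOn_deriv_deriv hθ]
      ring
  obtain ⟨hC2, -, -, -, hda, hdb⟩ := hQ
  simp_rw [mul_left_comm (Q _)] at h
  rw [intervalIntegral.integral_const_mul,
    integral_mul_deriv_deriv_eq_neg_integral_deriv_sq hC2 hda hdb,
    integral_sub_mul_id_mul (g := fun θ => Q θ ^ 2) (hC2.continuous.pow 2)] at h
  linarith

end IsSpectralPair

theorem statement6_general (thmin thmax alpha r : ℝ)
    (hthth : thmin < thmax) (halpha : 0 < alpha)
    (lam c : ℝ) (hlam : 0 < lam) (Q : ℝ → ℝ)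
    (hQ : IsSpectralPair thmin thmax alpha r lam c Q) :
    (∫ θ in Set.Ioo thmin thmax, θ * Q θ ^ 2) / (∫ θ in Set.Ioo thmin thmax, Q θ ^ 2)
      > ∫ θ in Set.Ioo thmin thmax, θ * Q θ := by
  simp only [integral_Ioo_eq_intervalIntegral hthth.le]
  have hQ2 : 0 < ∫ θ in thmin..thmax, Q θ ^ 2 :=
    intervalIntegral.intervalIntegral_pos_of_pos_on ((hQ.1.continuous.pow 2).intervalIntegrable _ _)
      (fun θ hθ => pow_pos (hQ.2.1 θ (Ioo_subset_Icc_self hθ)) 2) hthth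
  have hQ'2 : 0 < ∫ θ in thmin..thmax, deriv Q θ ^ 2 := by
    obtain ⟨θ, hθ, hQ'θ⟩ := hQ.exists_deriv_ne_zero hthth hlam.ne'
    exact intervalIntegral.integral_pos hthth
      ((hQ.1.continuous_deriv one_le_two).pow 2).continuousOn (fun _ _ => sq_nonneg _)
      ⟨θ, Ioo_subset_Icc_self hθ, by positivity⟩
  have key : lam ^ 2 * ((∫ θ in thmin..thmax, θ * Q θ ^ 2) -
      (∫ θ in thmin..thmax, θ * Q θ) * ∫ θ in thmin..thmax, Q θ ^ 2) =
        alpha * ∫ θ in thmin..thmax, deriv Q θ ^ 2 := by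
    linear_combination hQ.sq_moment_eq hthth.le -
      (∫ θ in thmin..thmax, Q θ ^ 2) * hQ.mean_eq hthth.le
  rw [gt_iff_lt, lt_div_iff₀ hQ2, ← sub_pos]
  exact pos_of_mul_pos_right (key ▸ mul_pos halpha hQ'2) (sq_nonneg lam)

theorem statement6 (thmin thmax alpha r : ℝ)
    (hth : 0 < thmin) (hthth : thmin < thmax) (halpha : 0 < alpha) (hr : 0 < r)
    (lam c : ℝ) (hlam : 0 < lam) (Q : ℝ → ℝ)
    (hQ : IsSpectralPair thmin thmax alpha r lam c Q) :
    (∫ θ in Set.Ioo thmin thmax, θ * Q θ ^ 2) / (∫ θ in Set.Ioo thmin thmax, Q θ ^ 2)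
      > ∫ θ in Set.Ioo thmin thmax, θ * Q θ :=
  statement6_general thmin thmax alpha r hthth halpha lam c hlam Q hQ
end
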